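/- Let H be a numerical semigroup (a cofinite submonoid of ℕ containing 0) and let q ≥ 4 be an integer. Suppose the three smallest positive elements m₁ < m₂ < m₃ of H satisfy m₂ = q and m₃ = q+1, and 2m₁ ≥ q. Then the interval [m₁, 2(q+1)] contains at least 8 elements of H. -/

import Mathlib

/-!
The sums of at most two of `m₁, q, q + 1` all lie in `[m₁, 2q + 2]`. If `m₁ + 1 < q`, eight of them
form the chain `m₁ < q < q+1 < m₁+q < m₁+q+1 < 2q < 2q+1 < 2q+2`. Otherwise `q = m₁ + 1`, and
`m₁ < q < q+1 < 2m₁ < m₁+q < 2q < 2q+1 < 2q+2` is such a chain, using `q ≥ 4`.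
-/

open Set

theorem List.length_le_ncard_of_isChain_lt {α : Type*} [Preorder α] {l : List α} {s : Set α}
    (hs : s.Finite) (hl : l.IsChain (· < ·)) (hls : ∀ x ∈ l, x ∈ s) : l.length ≤ s.ncard := by
  classical
  rw [← List.toFinset_card_of_nodup hl.pairwise.nodup, ← ncard_coe_finset]
  exact ncard_le_ncard (fun x hx => hls x (List.mem_toFinset.mp hx)) hs

theorem AddSubmonoid.length_le_ncard_inter_Icc {H : AddSubmonoid ℕ} {a b : ℕ} {l : List ℕ}
    (hl : l.IsChain (· < ·)) (hmem : ∀ x ∈ l, x ∈ H) (hbounds : ∀ x ∈ l, a ≤ x ∧ x ≤ b) :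
    l.length ≤ ((H : Set ℕ) ∩ Icc a b).ncard :=
  l.length_le_ncard_of_isChain_lt ((finite_Icc a b).inter_of_right _) hl
    fun x hx => ⟨hmem x hx, hbounds x hx⟩

theorem stmt6_general (q m₁ m₂ m₃ : ℕ) (hq : 4 ≤ q) (H : AddSubmonoid ℕ)
    (hm₁ : m₁ ∈ H) (hm₂ : m₂ ∈ H) (hm₃ : m₃ ∈ H)
    (h₁₂ : m₁ < m₂)
    (hm₂q : m₂ = q) (hm₃q : m₃ = q + 1) (h2m₁ : 2 * m₁ ≥ q) :
    8 ≤ ((H : Set ℕ) ∩ Set.Icc m₁ (2 * (q + 1))).ncard := by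
  subst hm₂q hm₃q
  obtain hgap | rfl : m₁ + 1 < m₂ ∨ m₂ = m₁ + 1 := by omega
  · refine AddSubmonoid.length_le_ncard_inter_Icc
      (l := [m₁, m₂, m₂ + 1, m₁ + m₂, m₁ + (m₂ + 1), m₂ + m₂, m₂ + (m₂ + 1), m₂ + 1 + (m₂ + 1)])
      ?_ ?_ ?_
    · simp only [List.isChain_cons_cons, List.isChain_singleton, and_true]; omega
    · simp only [List.mem_cons, List.not_mem_nil, or_false, forall_eq_or_imp, forall_eq]
      exact ⟨hm₁, hm₂, hm₃, add_mem hm₁ hm₂, add_mem hm₁ hm₃, add_mem hm₂ hm₂, add_mem hm₂ hm₃,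
        add_mem hm₃ hm₃⟩
    · simp only [List.mem_cons, List.not_mem_nil, or_false, forall_eq_or_imp, forall_eq]; omega
  · refine AddSubmonoid.length_le_ncard_inter_Icc
      (l := [m₁, m₁ + 1, m₁ + 1 + 1, m₁ + m₁, m₁ + (m₁ + 1), m₁ + 1 + (m₁ + 1),
        m₁ + 1 + (m₁ + 1 + 1), m₁ + 1 + 1 + (m₁ + 1 + 1)]) ?_ ?_ ?_
    · simp only [List.isChain_cons_cons, List.isChain_singleton, and_true]; omega
    · simp only [List.mem_cons, List.not_mem_nil, or_false, forall_eq_or_imp, forall_eq]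
      exact ⟨hm₁, hm₂, hm₃, add_mem hm₁ hm₁, add_mem hm₁ hm₂, add_mem hm₂ hm₂, add_mem hm₂ hm₃,
        add_mem hm₃ hm₃⟩
    · simp only [List.mem_cons, List.not_mem_nil, or_false, forall_eq_or_imp, forall_eq]; omega

/-- Let `H ⊆ ℕ` be a numerical semigroup (an additive submonoid of ℕ with finite
complement) whose three smallest positive elements are `m₁ < m₂ < m₃` with
`m₂ = q`, `m₃ = q+1`, `2m₁ ≥ q`, `q ≥ 4`. Then `H ∩ [m₁, 2(q+1)]` has at least
8 elements. -/
theorem stmt6 (q m₁ m₂ m₃ : ℕ) (hq : 4 ≤ q) (H : AddSubmonoid ℕ)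
    (hcofin : (Set.univ \ (H : Set ℕ)).Finite)
    (hm₁ : m₁ ∈ H) (hm₂ : m₂ ∈ H) (hm₃ : m₃ ∈ H)
    (h₁₂ : m₁ < m₂) (h₂₃ : m₂ < m₃)
    (hmin : ∀ x ∈ H, 0 < x → x < m₃ → x = m₁ ∨ x = m₂)
    (h₁pos : 0 < m₁) (hm₂q : m₂ = q) (hm₃q : m₃ = q + 1) (h2m₁ : 2 * m₁ ≥ q) :
    8 ≤ ((H : Set ℕ) ∩ Set.Icc m₁ (2 * (q + 1))).ncard :=
  stmt6_general q m₁ m₂ m₃ hq H hm₁ hm₂ hm₃ h₁₂ hm₂q hm₃q h2m₁
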